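/- Let D be a balanced Ferrers board, i.e., a Young diagram in which the number of cells (i, j) with i + j even equals the number of cells with i + j odd. Then for every subset S of the cells of D with i + j even, the neighborhood N(S) — the set of cells of D that are edge-adjacent to some cell of S — satisfies |N(S)| ≥ |S| (Hall's condition holds for the bipartite adjacency graph of D). -/

import Mathlib

/-- Two cells of `ℕ × ℕ` are edge-adjacent: they differ by exactly 1 in one
coordinate and agree in the other. -/
abbrev CellAdj (a b : ℕ × ℕ) : Prop :=
  (a.1 = b.1 ∧ (a.2 + 1 = b.2 ∨ b.2 + 1 = a.2)) ∨
  (a.2 = b.2 ∧ (a.1 + 1 = b.1 ∨ b.1 + 1 = a.1))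

/-- `B` is balanced: the number of cells `(i, j)` with `i + j` even equals the
number of cells with `i + j` odd. -/
def IsBalanced (B : Finset (ℕ × ℕ)) : Prop :=
  (B.filter fun c => (c.1 + c.2) % 2 = 0).card =
  (B.filter fun c => (c.1 + c.2) % 2 = 1).card


/-! Induction on the board: if some row (or, after transposing, some column) is at least two
cells longer than the next one, its last two cells form a domino whose removal leaves a
balanced Ferrers board, and a matching of the smaller board extends by that domino. A board with
no such row or column is a staircase `{(i, j) | i + j < m}`, and a nonempty staircase is not
balanced: summing `(-1) ^ (i + j)` along its diagonals gives `∑ d < m, (-1) ^ d (d + 1) = ±⌈m / 2⌉`. An injective matching of the black cells gives Hall's condition at once. -/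

open Finset

theorem card_le_card_filter_exists_of_injOn {α β : Type*} {r : α → β → Prop} [DecidableRel r]
    {A S : Finset α} {B : Finset β} {f : α → β} (hf : ∀ a ∈ A, f a ∈ B ∧ r a (f a))
    (hinj : Set.InjOn f A) (hS : S ⊆ A) :
    S.card ≤ (B.filter fun b => ∃ s ∈ S, r s b).card :=
  card_le_card_of_injOn f (fun s hs => mem_filter.2 ⟨(hf s (hS hs)).1, s, hs, (hf s (hS hs)).2⟩)
    (hinj.mono (coe_subset.2 hS))

def cellSign (c : ℕ × ℕ) : ℤ := (-1) ^ (c.1 + c.2)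

def blackCells (B : Finset (ℕ × ℕ)) : Finset (ℕ × ℕ) :=
  B.filter fun c => (c.1 + c.2) % 2 = 0

theorem CellAdj.symm {a b : ℕ × ℕ} (h : CellAdj a b) : CellAdj b a := by
  unfold CellAdj at *
  omega

theorem CellAdj.mod_two_ne {a b : ℕ × ℕ} (h : CellAdj a b) :
    (a.1 + a.2) % 2 ≠ (b.1 + b.2) % 2 := by
  unfold CellAdj at h
  omega

theorem CellAdj.ne {a b : ℕ × ℕ} (h : CellAdj a b) : a ≠ b :=
  fun hab => h.mod_two_ne (hab ▸ rfl)

theorem cellSign_eq_ite (c : ℕ × ℕ) :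
    cellSign c = if (c.1 + c.2) % 2 = 0 then 1 else -1 := by
  rw [cellSign, neg_one_pow_eq_pow_mod_two]
  rcases Nat.mod_two_eq_zero_or_one (c.1 + c.2) with h | h <;> simp [h]

theorem CellAdj.cellSign_add {a b : ℕ × ℕ} (h : CellAdj a b) : cellSign a + cellSign b = 0 := by
  have := h.mod_two_ne
  rw [cellSign_eq_ite, cellSign_eq_ite]
  split_ifs <;> omega

theorem isBalanced_iff_sum_cellSign (B : Finset (ℕ × ℕ)) :
    IsBalanced B ↔ ∑ c ∈ B, cellSign c = 0 := by
  simp only [cellSign_eq_ite, sum_ite, sum_const, nsmul_eq_mul, mul_one, mul_neg, IsBalanced]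
  have hodd : (B.filter fun c => ¬(c.1 + c.2) % 2 = 0) = B.filter fun c => (c.1 + c.2) % 2 = 1 :=
    filter_congr fun c _ => by omega
  rw [hodd]
  omega

theorem sum_range_two_mul_neg_one_pow_mul_succ (k : ℕ) :
    ∑ d ∈ range (2 * k), (-1 : ℤ) ^ d * (d + 1) = -k := by
  induction k with
  | zero => simp
  | succ k ih =>
    rw [show 2 * (k + 1) = 2 * k + 1 + 1 by ring, sum_range_succ, sum_range_succ, ih,
      pow_succ, pow_mul]
    push_cast
    ring

theorem sum_range_neg_one_pow_mul_succ_ne_zero {m : ℕ} (hm : 0 < m) :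
    ∑ d ∈ range m, (-1 : ℤ) ^ d * (d + 1) ≠ 0 := by
  obtain ⟨k, rfl | rfl⟩ := Nat.even_or_odd' m
  · rw [sum_range_two_mul_neg_one_pow_mul_succ]
    omega
  · rw [sum_range_succ, sum_range_two_mul_neg_one_pow_mul_succ, pow_mul]
    push_cast
    simp only [one_pow, one_mul]
    omega

theorem sum_cellSign_of_mem_iff {s : Finset (ℕ × ℕ)} {m : ℕ}
    (hs : ∀ c, c ∈ s ↔ c.1 + c.2 < m) :
    ∑ c ∈ s, cellSign c = ∑ d ∈ range m, (-1 : ℤ) ^ d * (d + 1) := by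
  rw [← sum_fiberwise_of_maps_to (g := fun c => c.1 + c.2) (t := range m)
    fun c hc => mem_range.2 ((hs c).1 hc)]
  refine sum_congr rfl fun d hd => ?_
  have hfiber : (s.filter fun c => c.1 + c.2 = d) = antidiagonal d := by
    ext c
    have := mem_range.1 hd
    simp only [mem_filter, hs, HasAntidiagonal.mem_antidiagonal]
    omega
  rw [hfiber, sum_congr rfl fun c hc => by rw [cellSign, HasAntidiagonal.mem_antidiagonal.1 hc],
    sum_const, Nat.card_antidiagonal, nsmul_eq_mul, mul_comm]
  push_cast
  rfl

def HasBlackMatching (B : Finset (ℕ × ℕ)) : Prop :=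
  ∃ f : ℕ × ℕ → ℕ × ℕ,
    (∀ c ∈ blackCells B, f c ∈ B ∧ CellAdj c (f c)) ∧ Set.InjOn f (blackCells B)

theorem HasBlackMatching.of_sdiff_pair {B : Finset (ℕ × ℕ)} {a b : ℕ × ℕ} (ha : a ∈ B)
    (hb : b ∈ B) (hab : CellAdj a b) (h : HasBlackMatching (B \ {a, b})) :
    HasBlackMatching B := by
  wlog ha0 : (a.1 + a.2) % 2 = 0 generalizing a b
  · exact this hb ha hab.symm (by rwa [pair_comm]) (by have := hab.mod_two_ne; omega)
  obtain ⟨g, hg, hinj⟩ := h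
  have hblack : ∀ c ∈ blackCells B, c ≠ a → c ∈ blackCells (B \ {a, b}) := by
    intro c hc hca
    simp only [blackCells, mem_filter, mem_sdiff, mem_insert, mem_singleton] at hc ⊢
    refine ⟨⟨hc.1, ?_⟩, hc.2⟩
    rintro (rfl | rfl)
    · exact hca rfl
    · exact hab.mod_two_ne (ha0.trans hc.2.symm)
  have hgB : ∀ c ∈ blackCells B, c ≠ a → g c ∈ B \ {a, b} := fun c hc hca =>
    (hg c (hblack c hc hca)).1
  refine ⟨Function.update g a b, fun c hc => ?_, fun x hx y hy hxy => ?_⟩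
  · by_cases hca : c = a
    · subst hca
      simpa using ⟨hb, hab⟩
    · rw [Function.update_of_ne hca]
      exact ⟨(mem_sdiff.1 (hgB c hc hca)).1, (hg c (hblack c hc hca)).2⟩
  · have hb_notMem : b ∉ B \ {a, b} := by simp
    rcases eq_or_ne x a with hxa | hxa <;> rcases eq_or_ne y a with hya | hya
    · rw [hxa, hya]
    · rw [hxa, Function.update_self, Function.update_of_ne hya] at hxy
      exact absurd (hxy ▸ hgB y hy hya) hb_notMem
    · rw [hya, Function.update_self, Function.update_of_ne hxa] at hxy
      exact absurd (hxy.symm ▸ hgB x hx hxa) hb_notMem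
    · rw [Function.update_of_ne hxa, Function.update_of_ne hya] at hxy
      exact hinj (hblack x hx hxa) (hblack y hy hya) hxy

namespace YoungDiagram

def IsRemovableDomino (μ : YoungDiagram) (a b : ℕ × ℕ) : Prop :=
  a ∈ μ ∧ b ∈ μ ∧ CellAdj a b ∧ ∀ c ∈ μ, a ≤ c ∨ b ≤ c → c = a ∨ c = b

theorem IsRemovableDomino.transpose {μ : YoungDiagram} {a b : ℕ × ℕ}
    (h : μ.IsRemovableDomino a b) : μ.transpose.IsRemovableDomino a.swap b.swap := by
  obtain ⟨ha, hb, hab, hmax⟩ := h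
  have hab' : CellAdj a.swap b.swap := by
    unfold CellAdj at *
    simp only [Prod.fst_swap, Prod.snd_swap]
    omega
  refine ⟨mem_transpose.2 ha, mem_transpose.2 hb, hab', fun c hc hle => ?_⟩
  have hle' : a ≤ c.swap ∨ b ≤ c.swap :=
    hle.imp (fun h => by simpa using Prod.swap_le_swap.2 h) fun h => by
      simpa using Prod.swap_le_swap.2 h
  exact (hmax c.swap (mem_transpose.1 hc) hle').imp (fun h => by rw [← h, Prod.swap_swap])
    fun h => by rw [← h, Prod.swap_swap]

theorem isRemovableDomino_of_rowLen_add_two_le (μ : YoungDiagram) {i : ℕ}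
    (h : μ.rowLen (i + 1) + 2 ≤ μ.rowLen i) :
    μ.IsRemovableDomino (i, μ.rowLen i - 2) (i, μ.rowLen i - 1) := by
  refine ⟨mem_iff_lt_rowLen.2 (by omega), mem_iff_lt_rowLen.2 (by omega),
    Or.inl ⟨rfl, Or.inl (by omega)⟩, fun ⟨x, y⟩ hc hle => ?_⟩
  have hy := mem_iff_lt_rowLen.1 hc
  simp only [Prod.le_def] at hle
  have hx : x = i := by
    by_contra hx
    have := μ.rowLen_anti (i + 1) x (by omega)
    omega
  subst hx
  simp only [Prod.mk.injEq, true_and]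
  omega

theorem exists_isRemovableDomino_or_mem_iff (μ : YoungDiagram) :
    (∃ a b, μ.IsRemovableDomino a b) ∨ ∀ c, c ∈ μ ↔ c.1 + c.2 < μ.rowLen 0 := by
  by_cases hrow : ∃ i, μ.rowLen (i + 1) + 2 ≤ μ.rowLen i
  · obtain ⟨i, hi⟩ := hrow
    exact .inl ⟨_, _, μ.isRemovableDomino_of_rowLen_add_two_le hi⟩
  by_cases hcol : ∃ j, μ.colLen (j + 1) + 2 ≤ μ.colLen j
  · obtain ⟨j, hj⟩ := hcol
    rw [← rowLen_transpose, ← rowLen_transpose] at hj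
    have := (μ.transpose.isRemovableDomino_of_rowLen_add_two_le hj).transpose
    rw [transpose_transpose] at this
    exact .inl ⟨_, _, this⟩
  push Not at hrow hcol
  have hstep : ∀ i, μ.rowLen (i + 1) = μ.rowLen i - 1 := by
    intro i
    have hanti := μ.rowLen_anti i (i + 1) (Nat.le_succ i)
    have := hrow i
    by_contra hne
    -- two rows of equal positive length `L` leave a drop of two in column `L - 1`
    set L := μ.rowLen i
    have hin : i + 1 < μ.colLen (L - 1) := mem_iff_lt_colLen.1 (mem_iff_lt_rowLen.2 (by omega))
    have hout : ¬i < μ.colLen L := fun h => (mem_iff_lt_rowLen.1 (mem_iff_lt_colLen.2 h)).false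
    have := hcol (L - 1)
    rw [show L - 1 + 1 = L by omega] at this
    omega
  have hlen : ∀ i, μ.rowLen i = μ.rowLen 0 - i := by
    intro i
    induction i with
    | zero => rfl
    | succ i ih => rw [hstep, ih]; omega
  refine .inr fun ⟨i, j⟩ => ?_
  rw [mem_iff_lt_rowLen, hlen]
  omega

def eraseDomino (μ : YoungDiagram) {a b : ℕ × ℕ} (h : μ.IsRemovableDomino a b) :
    YoungDiagram where
  cells := μ.cells \ {a, b}
  isLowerSet := by
    rw [coe_sdiff]
    refine μ.isLowerSet.sdiff fun c hc x hx hxc => ?_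
    simp only [coe_insert, coe_singleton, Set.mem_insert_iff, Set.mem_singleton_iff] at hx ⊢
    exact h.2.2.2 c hc (hx.imp (fun h : x = a => h ▸ hxc) fun h : x = b => h ▸ hxc)

theorem hasBlackMatching_of_sum_cellSign_eq_zero (μ : YoungDiagram)
    (hμ : ∑ c ∈ μ.cells, cellSign c = 0) : HasBlackMatching μ.cells := by
  rcases μ.exists_isRemovableDomino_or_mem_iff with ⟨a, b, h⟩ | hstair
  · have ⟨ha, hb, hab, _⟩ := h
    have hsub : {a, b} ⊆ μ.cells := insert_subset_iff.2 ⟨ha, singleton_subset_iff.2 hb⟩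
    have hsum : ∑ c ∈ (μ.eraseDomino h).cells, cellSign c = 0 := by
      change ∑ c ∈ μ.cells \ {a, b}, cellSign c = 0
      rw [← hμ, ← sum_sdiff hsub, sum_pair hab.ne, hab.cellSign_add, add_zero]
    exact .of_sdiff_pair ha hb hab
      ((μ.eraseDomino h).hasBlackMatching_of_sum_cellSign_eq_zero hsum)
  · obtain hm | hm := Nat.eq_zero_or_pos (μ.rowLen 0)
    · refine ⟨id, fun c hc => absurd ((hstair c).1 (mem_filter.1 hc).1) (by omega), ?_⟩
      exact Set.injOn_id _
    · exact absurd (sum_cellSign_of_mem_iff hstair ▸ hμ)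
        (sum_range_neg_one_pow_mul_succ_ne_zero hm)
termination_by μ.cells.card
decreasing_by
  exact card_lt_card (sdiff_ssubset hsub (insert_nonempty _ _))

end YoungDiagram

/-- Hall's condition for a balanced Ferrers board: for every subset `S` of the
black cells (those `(i, j)` with `i + j` even) of a balanced Ferrers board `D`
(a finite lower set in `ℕ × ℕ`), the set of cells of `D` edge-adjacent to some
cell of `S` has at least `|S|` elements. -/
theorem ferrers_hall_condition (D : Finset (ℕ × ℕ))
    (hlower : ∀ i j i' j', (i, j) ∈ D → i' ≤ i → j' ≤ j → (i', j') ∈ D)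
    (hbal : IsBalanced D)
    (S : Finset (ℕ × ℕ)) (hS : S ⊆ D.filter fun c => (c.1 + c.2) % 2 = 0) :
    S.card ≤ (D.filter fun c => ∃ s ∈ S, CellAdj s c).card := by
  let μ : YoungDiagram :=
    ⟨D, fun ⟨i, j⟩ ⟨i', j'⟩ hle hmem => hlower i j i' j' hmem hle.1 hle.2⟩
  obtain ⟨f, hf, hinj⟩ :=
    μ.hasBlackMatching_of_sum_cellSign_eq_zero ((isBalanced_iff_sum_cellSign D).1 hbal)
  exact card_le_card_filter_exists_of_injOn hf hinj hS
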